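/- For every integer n ≥ 1, m_{2n}(√2) = Σ_{j=0}^{n} C(2n, 2j) · 2^j / ((2n − 2j + 1)(2j + 1)), and this quantity also equals (2^n − 1)^{−1} · Σ_{j=0}^{n−1} C(2n, 2j) · m_{2j}(√2). -/

import Mathlib

/-!
Put `r = 1/√2`. Splitting off the first term of the series gives `S = r (S' + X₀)`, where `S'` is
the same series in the shifted sequence `(X_{n+1})`: it has the law of `S` and is independent of
`X₀`. Expanding the power and using `E[X₀^j] = [j even]` yields the recursion
`2^q m_{2q} = ∑_{i ≤ q} C(2q,2i) m_{2i}`, which is the second claim and, with `m₀ = 1`, determines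
all even moments.

The closed form `a_n` satisfies the same recursion: its generating function
`∑ a_n t^{2n}/(2n)!` is `A(t) = sinh(√2 t)/(√2 t) · sinh t / t`, the recursion says
`A(√2 t) = cosh t · A(t)`, and this is `sinh 2t = 2 sinh t cosh t`. Coefficientwise the latter is
`∑_k C(2m,2k)/(2k+1) = 4^m/(2m+1)`, the sum of the odd binomial coefficients of `2m+1`.
-/

open MeasureTheory ProbabilityTheory Finset
open scoped ENNReal

lemma Finset.sum_range_two_mul_eq_sum_add {M : Type*} [AddCommMonoid M] (f : ℕ → M) (m : ℕ) :
    ∑ j ∈ range (2 * m), f j = ∑ k ∈ range m, (f (2 * k) + f (2 * k + 1)) := by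
  induction m with
  | zero => simp
  | succ m ih =>
    rw [mul_add, mul_one, sum_range_succ, sum_range_succ, sum_range_succ, ih, add_assoc]

lemma Finset.sum_range_two_mul_add_one_ite_even {M : Type*} [AddCommMonoid M] (f : ℕ → M)
    (q : ℕ) :
    ∑ j ∈ range (2 * q + 1), (if Even j then f j else 0) = ∑ i ∈ range (q + 1), f (2 * i) := by
  have hodd : ¬Even (2 * q + 1) := by simp [parity_simps]
  calc ∑ j ∈ range (2 * q + 1), (if Even j then f j else 0)
      = ∑ j ∈ range (2 * (q + 1)), (if Even j then f j else 0) := by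
        rw [show 2 * (q + 1) = 2 * q + 1 + 1 by ring, sum_range_succ _ (2 * q + 1), if_neg hodd,
          add_zero]
    _ = ∑ i ∈ range (q + 1), f (2 * i) := by
        rw [sum_range_two_mul_eq_sum_add]
        simp [parity_simps]

lemma Nat.sum_range_choose_odd (m : ℕ) :
    ∑ k ∈ range (m + 1), (2 * m + 1).choose (2 * k + 1) = 4 ^ m := by
  calc ∑ k ∈ range (m + 1), (2 * m + 1).choose (2 * k + 1)
      = ∑ j ∈ range (2 * (m + 1)), (2 * m).choose j := by
        rw [sum_range_two_mul_eq_sum_add]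
        exact sum_congr rfl fun k _ => Nat.choose_succ_succ _ _
    _ = 2 ^ (2 * m) := by
        rw [show 2 * (m + 1) = 2 * m + 1 + 1 by ring, sum_range_succ,
          Nat.choose_eq_zero_of_lt (by omega), add_zero, Nat.sum_range_choose]
    _ = 4 ^ m := by rw [pow_mul]; norm_num

lemma sum_range_choose_two_mul_div (m : ℕ) :
    ∑ k ∈ range (m + 1), ((2 * m).choose (2 * k) : ℝ) / (2 * k + 1) = 4 ^ m / (2 * m + 1) := by
  have hchoose (k : ℕ) : ((2 * m).choose (2 * k) : ℝ) / (2 * k + 1) =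
      ((2 * m + 1).choose (2 * k + 1) : ℝ) / (2 * m + 1) := by
    rw [div_eq_div_iff (by positivity) (by positivity)]
    have h : ((2 * m + 1 : ℕ) : ℝ) * (2 * m).choose (2 * k) =
        (2 * m + 1).choose (2 * k + 1) * ((2 * k + 1 : ℕ) : ℝ) := by
      exact_mod_cast Nat.add_one_mul_choose_eq (2 * m) (2 * k)
    push_cast at h
    linarith
  simp only [hchoose, ← sum_div]
  exact_mod_cast congrArg (fun s : ℕ => (s : ℝ) / (2 * m + 1)) (Nat.sum_range_choose_odd m)

lemma Nat.choose_two_mul_mul_choose_two_mul {n j k : ℕ} (h : j + k ≤ n) :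
    (2 * n).choose (2 * (j + k)) * (2 * (j + k)).choose (2 * j) =
      (2 * n).choose (2 * j) * (2 * (n - j)).choose (2 * k) := by
  rw [Nat.choose_mul (by omega)]
  congr 2 <;> omega

lemma Nat.choose_two_mul_sub {n j : ℕ} (h : j ≤ n) :
    (2 * n).choose (2 * (n - j)) = (2 * n).choose (2 * j) := by
  rw [show 2 * (n - j) = 2 * n - 2 * j by omega, Nat.choose_symm (by omega)]

noncomputable def sqrtTwoMoment (n : ℕ) : ℝ :=
  ∑ j ∈ range (n + 1), ((2 * n).choose (2 * j) : ℝ) * 2 ^ j /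
    ((2 * (n : ℝ) - 2 * (j : ℝ) + 1) * (2 * (j : ℝ) + 1))

lemma sqrtTwoMoment_eq_sum (n : ℕ) :
    sqrtTwoMoment n = ∑ j ∈ range (n + 1), ((2 * n).choose (2 * j) : ℝ) * 2 ^ j /
      ((2 * ((n - j : ℕ) : ℝ) + 1) * (2 * j + 1)) := by
  refine sum_congr rfl fun j hj => ?_
  rw [Nat.cast_sub (by simpa [Nat.lt_succ_iff] using hj), mul_sub]

theorem two_pow_mul_sqrtTwoMoment (n : ℕ) :
    2 ^ n * sqrtTwoMoment n =
      ∑ i ∈ range (n + 1), ((2 * n).choose (2 * i) : ℝ) * sqrtTwoMoment i := by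
  symm
  set f : ℕ → ℕ → ℝ := fun j k => ((2 * n).choose (2 * (j + k)) : ℝ) *
    (((2 * (j + k)).choose (2 * j) : ℝ) * 2 ^ j / ((2 * k + 1) * (2 * j + 1)))
  calc ∑ i ∈ range (n + 1), ((2 * n).choose (2 * i) : ℝ) * sqrtTwoMoment i
      = ∑ i ∈ range (n + 1), ∑ j ∈ range (i + 1), f j (i - j) := by
        refine sum_congr rfl fun i _ => ?_
        rw [sqrtTwoMoment_eq_sum, mul_sum]
        refine sum_congr rfl fun j hj => ?_
        simp only [f, Nat.add_sub_cancel' (by simpa [Nat.lt_succ_iff] using hj : j ≤ i)]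
    _ = ∑ j ∈ range (n + 1), ∑ k ∈ range (n + 1 - j), f j k := sum_range_diag_flip _ f
    _ = ∑ j ∈ range (n + 1), ((2 * n).choose (2 * j) : ℝ) * 2 ^ j / (2 * j + 1) *
          (4 ^ (n - j) / (2 * ((n - j : ℕ) : ℝ) + 1)) := by
        refine sum_congr rfl fun j hj => ?_
        have hjn : j ≤ n := by simpa [Nat.lt_succ_iff] using hj
        rw [← sum_range_choose_two_mul_div, mul_sum, show n + 1 - j = n - j + 1 by omega]
        refine sum_congr rfl fun k hk => ?_
        have hchoose : ((2 * n).choose (2 * (j + k)) : ℝ) * (2 * (j + k)).choose (2 * j) =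
            (2 * n).choose (2 * j) * (2 * (n - j)).choose (2 * k) := by
          exact_mod_cast Nat.choose_two_mul_mul_choose_two_mul
            (by simp only [mem_range] at hk; omega)
        simp only [f]
        field_simp
        linear_combination hchoose
    _ = 2 ^ n * sqrtTwoMoment n := by
        rw [sqrtTwoMoment_eq_sum, mul_sum, ← sum_range_reflect]
        refine sum_congr rfl fun j hj => ?_
        have hjn : j ≤ n := by simpa [Nat.lt_succ_iff] using hj
        rw [Nat.add_sub_cancel, Nat.sub_sub_self hjn, Nat.choose_two_mul_sub hjn]
        have hpow : (2 : ℝ) ^ (n - j) * 4 ^ j = 2 ^ n * 2 ^ j := by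
          rw [show (4 : ℝ) = 2 ^ 2 by norm_num, ← pow_mul, ← pow_add, ← pow_add]
          congr 1; omega
        field_simp
        linear_combination ((2 * n).choose (2 * j) : ℝ) * hpow

lemma eq_inv_mul_sum_of_two_pow_mul_eq {a : ℕ → ℝ} {n : ℕ} (hn : n ≠ 0)
    (h : 2 ^ n * a n = ∑ i ∈ range (n + 1), ((2 * n).choose (2 * i) : ℝ) * a i) :
    a n = ((2 : ℝ) ^ n - 1)⁻¹ * ∑ i ∈ range n, ((2 * n).choose (2 * i) : ℝ) * a i := by
  have hpos : (2 : ℝ) ^ n - 1 ≠ 0 := (sub_pos.2 (one_lt_pow₀ one_lt_two hn)).ne'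
  rw [sum_range_succ, Nat.choose_self, Nat.cast_one, one_mul] at h
  rw [eq_inv_mul_iff_mul_eq₀ hpos]
  linear_combination h

lemma eq_of_two_pow_mul_eq_sum_choose {a b : ℕ → ℝ}
    (ha : ∀ n, 2 ^ n * a n = ∑ i ∈ range (n + 1), ((2 * n).choose (2 * i) : ℝ) * a i)
    (hb : ∀ n, 2 ^ n * b n = ∑ i ∈ range (n + 1), ((2 * n).choose (2 * i) : ℝ) * b i)
    (h0 : a 0 = b 0) : a = b := by
  funext n
  induction n using Nat.strong_induction_on with
  | _ n ih =>
    rcases eq_or_ne n 0 with rfl | hn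
    · exact h0
    rw [eq_inv_mul_sum_of_two_pow_mul_eq hn (ha n), eq_inv_mul_sum_of_two_pow_mul_eq hn (hb n)]
    exact congrArg _ (sum_congr rfl fun i hi => by rw [ih i (mem_range.1 hi)])

noncomputable def geomSeries (r : ℝ) (x : ℕ → ℝ) : ℝ := ∑' n, r ^ (n + 1) * x n

section geomSeries

variable {r : ℝ} {x : ℕ → ℝ}

lemma measurable_geomSeries (r : ℝ) : Measurable (geomSeries r) :=
  Measurable.tsum fun n => (measurable_pi_apply n).const_mul _

lemma norm_pow_succ_mul_le (hr : |r| < 1) (hx : ∀ n, |x n| ≤ 1) (n : ℕ) :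
    ‖r ^ (n + 1) * x n‖ ≤ |r| ^ n := by
  rw [Real.norm_eq_abs, abs_mul, abs_pow]
  calc |r| ^ (n + 1) * |x n| ≤ |r| ^ (n + 1) := mul_le_of_le_one_right (by positivity) (hx n)
    _ ≤ |r| ^ n := pow_le_pow_of_le_one (abs_nonneg r) hr.le n.le_succ

lemma abs_geomSeries_le (hr : |r| < 1) (hx : ∀ n, |x n| ≤ 1) :
    |geomSeries r x| ≤ (1 - |r|)⁻¹ :=
  tsum_of_norm_bounded (hasSum_geometric_of_lt_one (abs_nonneg r) hr) (norm_pow_succ_mul_le hr hx)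

lemma geomSeries_eq_mul_add (hr : |r| < 1) (hx : ∀ n, |x n| ≤ 1) :
    geomSeries r x = r * (geomSeries r (fun n => x (n + 1)) + x 0) := by
  have hsum : Summable fun n => r ^ (n + 1) * x n :=
    .of_norm_bounded (summable_geometric_of_lt_one (abs_nonneg r) hr) (norm_pow_succ_mul_le hr hx)
  rw [geomSeries, hsum.tsum_eq_zero_add, geomSeries, mul_add, ← tsum_mul_left]
  simp only [pow_succ' r (_ + 1), mul_assoc]
  ring

end geomSeries

section Rademacher

variable {Ω : Type*} [MeasurableSpace Ω] {P : Measure Ω} [IsProbabilityMeasure P] {Y : Ω → ℝ}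

lemma ae_eq_one_or_eq_neg_one (hY : Measurable Y) (h1 : P {ω | Y ω = 1} = 1 / 2)
    (h2 : P {ω | Y ω = -1} = 1 / 2) : ∀ᵐ ω ∂P, Y ω = 1 ∨ Y ω = -1 := by
  have hmeas : MeasurableSet {ω | Y ω = 1 ∨ Y ω = -1} :=
    (hY (measurableSet_singleton 1)).union (hY (measurableSet_singleton (-1)))
  have hdisj : Disjoint {ω | Y ω = 1} {ω | Y ω = -1} :=
    Set.disjoint_left.2 fun ω (h : Y ω = 1) (h' : Y ω = -1) => by norm_num [h] at h'
  rw [ae_iff_measure_eq hmeas.nullMeasurableSet, Set.ofPred_or,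
    measure_union hdisj (hY (measurableSet_singleton (-1))), h1, h2, measure_univ,
    ENNReal.add_halves]

lemma map_eq_dirac_add_dirac (hY : Measurable Y) (h1 : P {ω | Y ω = 1} = 1 / 2)
    (h2 : P {ω | Y ω = -1} = 1 / 2) :
    P.map Y = (1 / 2 : ℝ≥0∞) • Measure.dirac 1 + (1 / 2 : ℝ≥0∞) • Measure.dirac (-1) := by
  rw [(Measure.ae_eq_or_eq_iff_map_eq_dirac_add_dirac hY.aemeasurable (by norm_num)).1
    (ae_eq_one_or_eq_neg_one hY h1 h2)]
  exact congrArg₂ (· • Measure.dirac (1 : ℝ) + · • Measure.dirac (-1 : ℝ)) h1 h2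

lemma integral_pow_eq_ite_even (hY : Measurable Y) (h1 : P {ω | Y ω = 1} = 1 / 2)
    (h2 : P {ω | Y ω = -1} = 1 / 2) (j : ℕ) :
    ∫ ω, Y ω ^ j ∂P = if Even j then 1 else 0 := by
  have hint (a : ℝ) : Integrable (fun x : ℝ => x ^ j) ((1 / 2 : ℝ≥0∞) • Measure.dirac a) :=
    (integrable_dirac enorm_lt_top).smul_measure (by norm_num)
  rw [← integral_map hY.aemeasurable (continuous_pow j).aestronglyMeasurable,
    map_eq_dirac_add_dirac hY h1 h2, integral_add_measure (hint 1) (hint (-1)),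
    integral_smul_measure, integral_smul_measure, integral_dirac, integral_dirac]
  rcases Nat.even_or_odd j with hj | hj
  · norm_num [hj.neg_one_pow, hj]
  · simp [hj.neg_one_pow, Nat.not_even_iff_odd.2 hj]

end Rademacher

lemma ProbabilityTheory.iIndepFun.indepFun_head_tail {Ω β : Type*} [MeasurableSpace Ω]
    {P : Measure Ω} [MeasurableSpace β] {X : ℕ → Ω → β} (hX : ∀ n, Measurable (X n))
    (h : iIndepFun X P) :
    IndepFun (X 0) (fun ω n => X (n + 1) ω) P := by
  rw [IndepFun_iff_Indep]
  refine indep_of_indep_of_le_right (indep_of_indep_of_le_left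
    (indep_iSup_of_disjoint (fun n => (hX n).comap_le) h.iIndep (S := {0}) (T := {n | 1 ≤ n})
      (by simp)) (le_iSup₂_of_le 0 rfl le_rfl)) ?_
  rw [MeasurableSpace.pi, MeasurableSpace.comap_iSup]
  refine iSup_le fun n => ?_
  rw [MeasurableSpace.comap_comp]
  exact le_iSup₂_of_le (n + 1) (by simp) le_rfl

section MomentRecursion

variable {Ω : Type*} [MeasurableSpace Ω] {P : Measure Ω} [IsProbabilityMeasure P] {X : ℕ → Ω → ℝ}
  (hX : ∀ n, Measurable (X n)) (h1 : ∀ n, P {ω | X n ω = 1} = 1 / 2)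
  (h2 : ∀ n, P {ω | X n ω = -1} = 1 / 2)
include hX h1 h2

lemma identDistrib_shift (hindep : iIndepFun X P) :
    IdentDistrib (fun ω n => X (n + 1) ω) (fun ω n => X n ω) P P :=
  .pi (fun n => ⟨(hX _).aemeasurable, (hX n).aemeasurable, by
      rw [map_eq_dirac_add_dirac (hX _) (h1 _) (h2 _),
        map_eq_dirac_add_dirac (hX n) (h1 n) (h2 n)]⟩)
    (hindep.precomp Nat.succ_injective) hindep

theorem integral_geomSeries_pow_two_mul (hindep : iIndepFun X P) {r : ℝ} (hr : |r| < 1)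
    (q : ℕ) :
    ∫ ω, geomSeries r (X · ω) ^ (2 * q) ∂P = r ^ (2 * q) * ∑ i ∈ range (q + 1),
      ((2 * q).choose (2 * i) : ℝ) * ∫ ω, geomSeries r (X · ω) ^ (2 * i) ∂P := by
  set σ : Ω → ℝ := fun ω => geomSeries r (X · ω)
  set τ : Ω → ℝ := fun ω => geomSeries r (fun n => X (n + 1) ω)
  have hsign : ∀ᵐ ω ∂P, ∀ n, |X n ω| ≤ 1 := by
    filter_upwards [ae_all_iff.2 fun n => ae_eq_one_or_eq_neg_one (hX n) (h1 n) (h2 n)] with ω hω n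
    rcases hω n with h | h <;> simp [h]
  have hτ_meas : Measurable τ :=
    (measurable_geomSeries r).comp (measurable_pi_iff.2 fun n => hX (n + 1))
  have hτ_bound : ∀ᵐ ω ∂P, |τ ω| ≤ (1 - |r|)⁻¹ := by
    filter_upwards [hsign] with ω hω using abs_geomSeries_le hr fun n => hω (n + 1)
  have hτ_moment (k : ℕ) : ∫ ω, τ ω ^ k ∂P = ∫ ω, σ ω ^ k ∂P :=
    ((identDistrib_shift hX h1 h2 hindep).comp ((measurable_geomSeries r).pow_const k)).integral_eq
  have hind : IndepFun τ (X 0) P :=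
    (hindep.indepFun_head_tail hX).symm.comp (measurable_geomSeries r) measurable_id
  have hind_pow (j k : ℕ) : IndepFun (fun ω => τ ω ^ j) (fun ω => X 0 ω ^ k) P :=
    hind.comp (measurable_id.pow_const j) (measurable_id.pow_const k)
  have hterm_int (j k : ℕ) : Integrable (fun ω => τ ω ^ j * X 0 ω ^ k) P := by
    refine (hind_pow j k).integrable_mul ?_ ?_
    · exact .of_bound (hτ_meas.pow_const j).aestronglyMeasurable ((1 - |r|)⁻¹ ^ j) <| by
        filter_upwards [hτ_bound] with ω hω
        simpa [abs_pow] using pow_le_pow_left₀ (abs_nonneg _) hω j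
    · exact .of_bound ((hX 0).pow_const k).aestronglyMeasurable 1 <| by
        filter_upwards [hsign] with ω hω
        simpa [abs_pow] using pow_le_one₀ (abs_nonneg _) (hω 0)
  have hdecomp : σ =ᵐ[P] fun ω => r * (τ ω + X 0 ω) := by
    filter_upwards [hsign] with ω hω using geomSeries_eq_mul_add hr hω
  calc ∫ ω, σ ω ^ (2 * q) ∂P
      = r ^ (2 * q) * ∑ j ∈ range (2 * q + 1),
          (∫ ω, τ ω ^ j * X 0 ω ^ (2 * q - j) ∂P) * ((2 * q).choose j : ℝ) := by
        rw [integral_congr_ae (hdecomp.mono fun ω h => congrArg (· ^ (2 * q)) h)]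
        simp only [mul_pow, add_pow]
        rw [integral_const_mul, integral_finsetSum _ fun j _ => (hterm_int _ _).mul_const _]
        simp only [integral_mul_const]
    _ = r ^ (2 * q) * ∑ j ∈ range (2 * q + 1),
          (if Even j then ((2 * q).choose j : ℝ) * ∫ ω, σ ω ^ j ∂P else 0) := by
        congr 1
        refine sum_congr rfl fun j hj => ?_
        rw [(hind_pow _ _).integral_fun_mul_eq_mul_integral
          (hτ_meas.pow_const j).aestronglyMeasurable ((hX 0).pow_const _).aestronglyMeasurable,
          integral_pow_eq_ite_even (hX 0) (h1 0) (h2 0), hτ_moment]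
        simp only [Nat.even_sub (by simpa [Nat.lt_succ_iff] using hj), even_two_mul, true_iff]
        split_ifs <;> ring
    _ = _ := by rw [sum_range_two_mul_add_one_ite_even]

end MomentRecursion

/-- `m_(2n)(√2) = ∑_{j=0}^{n} C(2n,2j) 2^j /((2n-2j+1)(2j+1))`
and also `m_(2n)(√2) = (2^n - 1)⁻¹ ∑_{j=0}^{n-1} C(2n,2j) m_(2j)(√2)`. -/
theorem stmt_15 {Ω : Type*} [MeasurableSpace Ω] (P : Measure Ω) [IsProbabilityMeasure P]
    (X : ℕ → Ω → ℝ) (hmeas : ∀ n, Measurable (X n))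
    (hindep : iIndepFun X P)
    (h1 : ∀ n, P {ω | X n ω = 1} = 1 / 2) (h2 : ∀ n, P {ω | X n ω = -1} = 1 / 2)
    (S : ℝ → Ω → ℝ)
    (hS : ∀ l : ℝ, 1 < l → ∀ ω, S l ω = ∑' n : ℕ, l ^ (-(n + 1 : ℤ)) * X n ω)
    (m : ℝ → ℕ → ℝ) (hm : ∀ l k, m l k = ∫ ω, (S l ω) ^ k ∂P)
    (n : ℕ) (hn : 1 ≤ n) :
    (m (Real.sqrt 2) (2 * n) = ∑ j ∈ Finset.range (n + 1),
        ((2 * n).choose (2 * j) : ℝ) * 2 ^ j /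
          ((2 * (n : ℝ) - 2 * (j : ℝ) + 1) * (2 * (j : ℝ) + 1))) ∧
      m (Real.sqrt 2) (2 * n) = ((2 : ℝ) ^ n - 1)⁻¹ *
        ∑ j ∈ Finset.range n, ((2 * n).choose (2 * j) : ℝ) * m (Real.sqrt 2) (2 * j) := by
  have hS_eq (ω : Ω) : S (Real.sqrt 2) ω = geomSeries (Real.sqrt 2)⁻¹ (X · ω) := by
    rw [hS _ Real.one_lt_sqrt_two, geomSeries]
    simp only [zpow_neg, ← Nat.cast_succ, zpow_natCast, inv_pow]
  have hr : |(Real.sqrt 2)⁻¹| < 1 := by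
    rw [abs_inv, abs_of_pos (by positivity)]
    exact inv_lt_one_of_one_lt₀ Real.one_lt_sqrt_two
  have hrec (q : ℕ) : 2 ^ q * m (Real.sqrt 2) (2 * q) =
      ∑ i ∈ range (q + 1), ((2 * q).choose (2 * i) : ℝ) * m (Real.sqrt 2) (2 * i) := by
    simp only [hm, hS_eq]
    rw [integral_geomSeries_pow_two_mul hmeas h1 h2 hindep hr, pow_mul, inv_pow,
      Real.sq_sqrt zero_le_two, inv_pow, ← mul_assoc, mul_inv_cancel₀ (by positivity), one_mul]
  have hclosed : (fun q => m (Real.sqrt 2) (2 * q)) = sqrtTwoMoment :=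
    eq_of_two_pow_mul_eq_sum_choose hrec two_pow_mul_sqrtTwoMoment (by simp [hm, sqrtTwoMoment])
  exact ⟨congrFun hclosed n, eq_inv_mul_sum_of_two_pow_mul_eq
    (a := fun q => m (Real.sqrt 2) (2 * q)) (Nat.one_le_iff_ne_zero.1 hn) (hrec n)⟩
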